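/- arXiv:1706.03417 — 4 statements merged into one kernel-verified Lean document; each statement's English description precedes it below -/
import Mathlib

section
/- Let k be a field of characteristic p, R = k[T]/(T^p), and for 1 ≤ i ≤ p−1 let C be the two-term complex R →(multiplication by T^i) R in degrees 1 and 0. Let φ : C → k[1] be the chain map given in degree 1 by the augmentation composed with multiplication by T^{i−1} (i.e., the map R → k sending x to the augmentation of T^{i−1}x). Then φ is nullhomotopic if and only if i ≥ 2. -/
/-- Over `R = k[T]/(T^p)` with augmentation `ε` (sending `T` to `0`), the chain map
`φ : (R →(T^i) R) → k[1]` given in degree 1 by `x ↦ ε(T^{i−1} x)` is nullhomotopic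
iff `i ≥ 2`.  A nullhomotopy amounts to an `R`-linear map `h : R → k` (where `k` is
an `R`-module via `ε`) with `h(T^i x) = ε(T^{i−1} x)` for all `x`. -/
theorem stmt4 (k : Type*) [Field k] (p : ℕ) [Fact p.Prime] [CharP k p]
    (i : ℕ) (hi1 : 1 ≤ i) (hip : i ≤ p - 1)
    (ε : (Polynomial k ⧸ Ideal.span {(Polynomial.X : Polynomial k) ^ p}) →ₐ[k] k)
    (hε : ε (Ideal.Quotient.mk _ Polynomial.X) = 0) :
    (∃ h : (Polynomial k ⧸ Ideal.span {(Polynomial.X : Polynomial k) ^ p}) →ₗ[k] k,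
      (∀ r x, h (r * x) = ε r * h x) ∧
      (∀ x, h ((Ideal.Quotient.mk _ Polynomial.X) ^ i * x) =
        ε ((Ideal.Quotient.mk _ Polynomial.X) ^ (i - 1) * x))) ↔ 2 ≤ i := by
  constructor
  · rintro ⟨h, hlin, hspec⟩
    by_contra hlt
    push_neg at hlt
    have hi : i = 1 := by omega
    subst hi
    have h1 := hspec 1
    have h2 := hlin (Ideal.Quotient.mk _ Polynomial.X) 1
    rw [hε, zero_mul, mul_one] at h2
    simp only [pow_one, mul_one, Nat.sub_self, pow_zero, map_one, h2] at h1
    exact (zero_ne_one (α := k)) h1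
  · intro h2
    refine ⟨0, by simp, fun x => ?_⟩
    have : ε ((Ideal.Quotient.mk _ Polynomial.X) ^ (i - 1) * x) = 0 := by
      rw [map_mul, map_pow, hε, zero_pow (by omega), zero_mul]
    simp [this]
end

section
/- Let S₃ act on Hom⁰(M, M) ⊗ ℤ[1/6] (trace-zero endomorphisms of the standard representation M, with coefficients extended to ℤ[1/6]) by conjugation. Let e be the projection to the trace-zero subspace of the image of the 3-cycle (1 2 3), and let W be the ℤ[1/6]-submodule spanned by the images of the three transpositions. Then Hom⁰(M,M) ⊗ ℤ[1/6] = ℤ[1/6]·e ⊕ W, S₃ acts on the line ℤ[1/6]·e through the sign character, and W is S₃-stable. -/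
local notation "R6" => Localization.Away (6 : ℤ)

set_option maxHeartbeats 4000000 in
/-- Decomposition of trace-zero `2×2` matrices over `ℤ[1/6]` under the conjugation
action of `S₃` (realized via `(1 2) ↦ S`, `(1 2 3) ↦ T`): with `e` the trace-zero
projection of `T` and `W` the span of the images of the three transpositions, we have
`sl₂ = ℤ[1/6]·e ⊕ W`, `S₃` acts on `ℤ[1/6]·e` by the sign character, and `W` is stable. -/
theorem stmt13
    (φ : Equiv.Perm (Fin 3) →* Matrix (Fin 2) (Fin 2) (Localization.Away (6 : ℤ)))
    (hinj : Function.Injective φ)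
    (hS : φ (Equiv.swap 0 1) = !![0, 1; 1, 0])
    (hT : φ (finRotate 3) = !![-1, 1; -1, 0])
    (e : Matrix (Fin 2) (Fin 2) (Localization.Away (6 : ℤ)))
    (he : (2 : Localization.Away (6 : ℤ)) • e =
      2 • φ (finRotate 3) - Matrix.trace (φ (finRotate 3)) • 1)
    (W : Submodule (Localization.Away (6 : ℤ))
      (Matrix (Fin 2) (Fin 2) (Localization.Away (6 : ℤ))))
    (hW : W = Submodule.span (Localization.Away (6 : ℤ))
      {φ (Equiv.swap 0 1), φ (Equiv.swap 0 2), φ (Equiv.swap 1 2)}) :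
    LinearMap.ker (Matrix.traceLinearMap (Fin 2) (Localization.Away (6 : ℤ))
        (Localization.Away (6 : ℤ))) =
      Submodule.span (Localization.Away (6 : ℤ)) {e} ⊔ W ∧
    Submodule.span (Localization.Away (6 : ℤ)) {e} ⊓ W = ⊥ ∧
    (∀ σ : Equiv.Perm (Fin 3), φ σ * e * (φ σ)⁻¹ = (Equiv.Perm.sign σ : ℤ) • e) ∧
    (∀ σ : Equiv.Perm (Fin 3), ∀ w ∈ W, φ σ * w * (φ σ)⁻¹ ∈ W) := by
  -- invertibility of 6
  have h6 : IsUnit (6 : R6) := by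
    have := IsLocalization.Away.algebraMap_isUnit (S := R6) (6 : ℤ)
    simpa using this
  obtain ⟨u, hu⟩ := h6
  set s : R6 := ↑u⁻¹ with hs
  have h6s : (6 : R6) * s = 1 := by rw [← hu, hs]; exact u.mul_inv
  have msmul : ∀ (M N x : Matrix (Fin 2) (Fin 2) R6) (r : R6),
      M * (r • x) * N = r • (M * x * N) := by
    intro M N x r
    ext i j
    simp [Matrix.mul_apply, Fin.sum_univ_two]
    ring
  -- explicit images of group elements
  have h02 : φ (Equiv.swap 0 2) = !![1, -1; 0, -1] := by
    have hd : Equiv.swap (0 : Fin 3) 2 = finRotate 3 * Equiv.swap 0 1 := by decide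
    rw [hd, map_mul, hS, hT]
    ext i j; fin_cases i <;> fin_cases j <;>
      simp [Matrix.mul_apply, Fin.sum_univ_two] <;> norm_num
  have h12 : φ (Equiv.swap 1 2) = !![-1, 0; -1, 1] := by
    have hd : Equiv.swap (1 : Fin 3) 2 = Equiv.swap 0 1 * finRotate 3 := by decide
    rw [hd, map_mul, hS, hT]
    ext i j; fin_cases i <;> fin_cases j <;>
      simp [Matrix.mul_apply, Fin.sum_univ_two] <;> norm_num
  have hT2 : φ (finRotate 3 * finRotate 3) = !![0, -1; 1, -1] := by
    rw [map_mul, hT]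
    ext i j; fin_cases i <;> fin_cases j <;>
      simp [Matrix.mul_apply, Fin.sum_univ_two] <;> norm_num
  -- explicit e
  have hE : (2 : R6) • e = !![-1, 2; -2, 1] := by
    rw [he, hT]
    ext i j; fin_cases i <;> fin_cases j <;>
      simp [Matrix.trace, Fin.sum_univ_two, Matrix.one_apply] <;> ring
  have h2s : (3 * s) * 2 = 1 := by linear_combination h6s
  have he2 : e = (3 * s) • !![-1, 2; -2, 1] := by
    rw [← hE, smul_smul, h2s, one_smul]
  -- matrix inverses through φ
  have hinv : ∀ σ : Equiv.Perm (Fin 3), (φ σ)⁻¹ = φ σ⁻¹ := by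
    intro σ
    refine Matrix.inv_eq_left_inv ?_
    rw [← map_mul, inv_mul_cancel, map_one]
  have hW' : W = Submodule.span R6
      {(!![0, 1; 1, 0] : Matrix (Fin 2) (Fin 2) R6), !![1, -1; 0, -1], !![-1, 0; -1, 1]} := by
    rw [hW, hS, h02, h12]
  refine ⟨?_, ?_, ?_, ?_⟩
  · -- ker trace = span e ⊔ W
    apply le_antisymm
    · intro A hA
      have htr : A 0 0 + A 1 1 = 0 := by
        have := (LinearMap.mem_ker).1 hA
        simpa [Matrix.trace, Fin.sum_univ_two] using this
      set x := A 0 0 with hx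
      set y := A 0 1 with hy
      set z := A 1 0 with hz
      set a : R6 := 4 * s * (x + y - z) with ha
      have hdec : A = a • e +
          ((y - a) • !![0, 1; 1, 0] + (-x - 2 * s * (x + y - z)) • !![-1, 0; -1, 1]) := by
        rw [he2, Matrix.eta_fin_two A, ← hx, ← hy, ← hz]
        ext i j
        fin_cases i <;> fin_cases j <;>
          simp [Matrix.smul_apply, ha, smul_eq_mul]
        · linear_combination (2 * s * (x + y - z)) * h6s
        · linear_combination (-4 * s * (x + y - z)) * h6s
        · linear_combination ((x + y - z) * (4 * s + 1)) * h6s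
        · linear_combination htr - (2 * s * (x + y - z)) * h6s
      rw [hdec]
      refine Submodule.add_mem _ ?_ ?_
      · exact Submodule.mem_sup_left (Submodule.smul_mem _ _
          (Submodule.mem_span_singleton_self e))
      · refine Submodule.mem_sup_right ?_
        rw [hW']
        refine Submodule.add_mem _ ?_ ?_
        · exact Submodule.smul_mem _ _ (Submodule.subset_span (by simp))
        · exact Submodule.smul_mem _ _ (Submodule.subset_span (by simp))
    · refine sup_le ?_ ?_
      · rw [Submodule.span_le]
        rintro _ rfl
        simp only [SetLike.mem_coe, LinearMap.mem_ker, Matrix.traceLinearMap_apply]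
        rw [he2]
        simp [Matrix.trace, Fin.sum_univ_two]
        ring
      · rw [hW']
        rw [Submodule.span_le]
        rintro B hB
        simp only [Set.mem_insert_iff, Set.mem_singleton_iff] at hB
        rcases hB with rfl | rfl | rfl <;>
          simp [LinearMap.mem_ker, Matrix.trace, Fin.sum_univ_two]
  · -- trivial intersection
    rw [eq_bot_iff]
    rintro v ⟨hv1, hv2⟩
    obtain ⟨a, rfl⟩ := Submodule.mem_span_singleton.1 hv1
    rw [hW'] at hv2
    have hv2' : a • e ∈ Submodule.span R6
        {(!![0, 1; 1, 0] : Matrix (Fin 2) (Fin 2) R6), !![-1, 0; -1, 1]} := by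
      refine Submodule.span_le.2 ?_ hv2
      rintro B hB
      simp only [Set.mem_insert_iff, Set.mem_singleton_iff] at hB
      rcases hB with rfl | rfl | rfl
      · exact Submodule.subset_span (by simp)
      · have h' : (!![1, -1; 0, -1] : Matrix (Fin 2) (Fin 2) R6) =
            (-1 : R6) • !![0, 1; 1, 0] + (-1 : R6) • !![-1, 0; -1, 1] := by
          ext i j; fin_cases i <;> fin_cases j <;> simp <;> norm_num
        rw [h']
        exact Submodule.add_mem _
          (Submodule.smul_mem _ _ (Submodule.subset_span (by simp)))
          (Submodule.smul_mem _ _ (Submodule.subset_span (by simp)))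
      · exact Submodule.subset_span (by simp)
    obtain ⟨b, c, hbc⟩ := Submodule.mem_span_pair.1 hv2'
    rw [he2] at hbc
    have h00 := congrFun (congrFun hbc 0) 0
    have h01 := congrFun (congrFun hbc 0) 1
    have h10 := congrFun (congrFun hbc 1) 0
    simp [Matrix.smul_apply, smul_eq_mul] at h00 h01 h10
    have ha0 : a = 0 := by
      linear_combination 24 * s^2 * (h10 - h01 - h00) - a * (36 * s^2 + 6 * s + 1) * h6s
    simp [ha0]
  · -- sign action
    intro σ
    have hall : ∀ τ : Equiv.Perm (Fin 3), τ = 1 ∨ τ = finRotate 3 ∨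
        τ = finRotate 3 * finRotate 3 ∨ τ = Equiv.swap 0 1 ∨
        τ = Equiv.swap 0 1 * finRotate 3 ∨ τ = finRotate 3 * Equiv.swap 0 1 := by decide
    rcases hall σ with rfl | rfl | rfl | rfl | rfl | rfl
    · simp
    · rw [hinv, show (finRotate 3 : Equiv.Perm (Fin 3))⁻¹ = finRotate 3 * finRotate 3
          from by decide, hT, hT2, he2,
        show ((Equiv.Perm.sign (finRotate 3 : Equiv.Perm (Fin 3)) : ℤ)) = 1 from by decide,
        one_zsmul]
      ext i j; fin_cases i <;> fin_cases j <;>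
        simp [Matrix.mul_apply, Fin.sum_univ_two] <;> ring
    · rw [hinv, show (finRotate 3 * finRotate 3 : Equiv.Perm (Fin 3))⁻¹ = finRotate 3
          from by decide, hT, hT2, he2,
        show ((Equiv.Perm.sign (finRotate 3 * finRotate 3 : Equiv.Perm (Fin 3)) : ℤ)) = 1
          from by decide, one_zsmul]
      ext i j; fin_cases i <;> fin_cases j <;>
        simp [Matrix.mul_apply, Fin.sum_univ_two] <;> ring
    · rw [hinv, show (Equiv.swap (0 : Fin 3) 1)⁻¹ = Equiv.swap 0 1 from by decide, hS, he2,
        show ((Equiv.Perm.sign (Equiv.swap (0 : Fin 3) 1) : ℤ)) = -1 from by decide,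
        neg_one_zsmul]
      ext i j; fin_cases i <;> fin_cases j <;>
        simp [Matrix.mul_apply, Fin.sum_univ_two] <;> ring
    · rw [hinv, show (Equiv.swap (0 : Fin 3) 1 * finRotate 3)⁻¹ =
          Equiv.swap 0 1 * finRotate 3 from by decide, map_mul, hS, hT, he2,
        show ((Equiv.Perm.sign (Equiv.swap (0 : Fin 3) 1 * finRotate 3) : ℤ)) = -1
          from by decide, neg_one_zsmul]
      ext i j; fin_cases i <;> fin_cases j <;>
        simp [Matrix.mul_apply, Fin.sum_univ_two] <;> ring
    · rw [hinv, show (finRotate 3 * Equiv.swap (0 : Fin 3) 1)⁻¹ =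
          finRotate 3 * Equiv.swap 0 1 from by decide, map_mul, hT, hS, he2,
        show ((Equiv.Perm.sign (finRotate 3 * Equiv.swap (0 : Fin 3) 1) : ℤ)) = -1
          from by decide, neg_one_zsmul]
      ext i j; fin_cases i <;> fin_cases j <;>
        simp [Matrix.mul_apply, Fin.sum_univ_two] <;> ring
  · -- W stable
    intro σ w hw
    rw [hinv]
    rw [hW] at hw ⊢
    have key : ∀ σ' τ : Equiv.Perm (Fin 3),
        (τ = Equiv.swap 0 1 ∨ τ = Equiv.swap 0 2 ∨ τ = Equiv.swap 1 2) →
        (σ' * τ * σ'⁻¹ = Equiv.swap 0 1 ∨ σ' * τ * σ'⁻¹ = Equiv.swap 0 2 ∨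
         σ' * τ * σ'⁻¹ = Equiv.swap 1 2) := by decide
    induction hw using Submodule.span_induction with
    | mem x hx =>
        simp only [Set.mem_insert_iff, Set.mem_singleton_iff] at hx
        rcases hx with rfl | rfl | rfl
        · rw [← map_mul, ← map_mul]
          rcases key σ (Equiv.swap 0 1) (Or.inl rfl) with h | h | h <;> rw [h] <;>
            exact Submodule.subset_span (by simp)
        · rw [← map_mul, ← map_mul]
          rcases key σ (Equiv.swap 0 2) (Or.inr (Or.inl rfl)) with h | h | h <;> rw [h] <;>
            exact Submodule.subset_span (by simp)
        · rw [← map_mul, ← map_mul]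
          rcases key σ (Equiv.swap 1 2) (Or.inr (Or.inr rfl)) with h | h | h <;> rw [h] <;>
            exact Submodule.subset_span (by simp)
    | zero => simp
    | add x y hx hy ihx ihy =>
        rw [mul_add, add_mul]
        exact Submodule.add_mem _ ihx ihy
    | smul r x hx ih =>
        rw [msmul]
        exact Submodule.smul_mem _ _ ih
end

section
/- Let q be an odd prime, G = GL₂(ℤ/qℤ), and B ≤ G the subgroup of upper-triangular matrices. Let A be an abelian group of odd order which is a quotient of (ℤ/qℤ)*, and let α : B → A be the homomorphism sending the matrix with diagonal entries a, d to the image of a/d in A. Then the transfer (corestriction) map H¹(B, A) → H¹(G, A) (with trivial actions) sends the class of α to zero; equivalently, the transfer homomorphism Ver : G^{ab} → B^{ab} composed with α, i.e. α ∘ Ver : G → A, is the trivial homomorphism. -/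
/-!
A homomorphism `f` from `GL₂(K)` to an abelian group is constant on conjugacy classes, so it
kills every element conjugate to its own square: the unipotents `[1, x; 0, 1]` and `[1, 0; x, 1]`
when `2` is invertible (conjugate by `diag(2, 1)` resp. `diag(1, 2)`). Since `diag(u, 1)` and
`diag(1, u)` are conjugate with product the scalar `u`, if `f` kills scalars then `f (diag(u, 1))`
has order at most two, hence is trivial when the target has odd order. Unipotent and diagonal
matrices generate `GL₂(K)`, so such an `f` is trivial. The transfer of `α` kills scalars: on a
central element `z` it equals `α (z ^ [G : B])`, and `α` is trivial on scalar matrices.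
-/

theorem eq_one_of_sq_eq_one_of_odd_card {G : Type*} [Group G] (hG : Odd (Nat.card G)) {a : G}
    (h : a ^ 2 = 1) : a = 1 :=
  (Nat.coprime_two_right.mpr hG).pow_left_bijective.injective (by simpa using h)

namespace MonoidHom

variable {G A : Type*} [Group G] [CommGroup A]

theorem map_eq_of_semiconjBy (f : G →* A) {x y z : G} (h : SemiconjBy x y z) : f y = f z :=
  semiconjBy_iff_eq.mp (h.map f)

theorem map_eq_one_of_semiconjBy_sq (f : G →* A) {x y : G} (h : SemiconjBy x y (y ^ 2)) :
    f y = 1 := by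
  have := f.map_eq_of_semiconjBy h
  rw [map_pow, sq] at this
  exact right_eq_mul.mp this

end MonoidHom

theorem Subgroup.inv_mul_pow_mul_eq_of_mem_center {G : Type*} [Group G] {g : G}
    (hg : g ∈ Subgroup.center G) (k : ℕ) (g₀ : G) : g₀⁻¹ * g ^ k * g₀ = g ^ k := by
  rw [mul_assoc, ← Subgroup.mem_center_iff.mp ((Subgroup.center G).pow_mem hg k) g₀,
    inv_mul_cancel_left]

theorem Subgroup.pow_index_mem_of_mem_center {G : Type*} [Group G] (H : Subgroup G) {g : G}
    (hg : g ∈ Subgroup.center G) : g ^ H.index ∈ H :=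
  MonoidHom.transfer_eq_pow_aux g fun k g₀ _ => inv_mul_pow_mul_eq_of_mem_center hg k g₀

theorem MonoidHom.transfer_eq_of_mem_center {G A : Type*} [Group G] [CommGroup A]
    {H : Subgroup G} [H.FiniteIndex] (ϕ : H →* A) {g : G} (hg : g ∈ Subgroup.center G) :
    ϕ.transfer g = ϕ ⟨g ^ H.index, H.pow_index_mem_of_mem_center hg⟩ :=
  ϕ.transfer_eq_pow g fun k g₀ _ => Subgroup.inv_mul_pow_mul_eq_of_mem_center hg k g₀

namespace Matrix.GeneralLinearGroup

section CommRing

variable {R : Type*} [CommRing R]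

def lowerLeftHom : AddChar R (GL (Fin 2) R) where
  toFun x := ⟨!![1, 0; x, 1], !![1, 0; -x, 1], by simp [one_fin_two], by simp [one_fin_two]⟩
  map_zero_eq_one' := by simp [Units.ext_iff, one_fin_two]
  map_add_eq_mul' a b := by simp [Units.ext_iff, add_comm]

def diagHom : Rˣ × Rˣ →* GL (Fin 2) R where
  toFun u := ⟨!![(u.1 : R), 0; 0, u.2], !![(u.1⁻¹ : Rˣ), 0; 0, (u.2⁻¹ : Rˣ)],
    by simp [one_fin_two], by simp [one_fin_two]⟩
  map_one' := by simp [Units.ext_iff, one_fin_two]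
  map_mul' a b := by simp [Units.ext_iff]

@[simp]
lemma coe_lowerLeftHom (x : R) : (lowerLeftHom x : Matrix (Fin 2) (Fin 2) R) = !![1, 0; x, 1] :=
  rfl

@[simp]
lemma coe_diagHom (u : Rˣ × Rˣ) :
    (diagHom u : Matrix (Fin 2) (Fin 2) R) = !![(u.1 : R), 0; 0, u.2] :=
  rfl

lemma diagHom_self (u : Rˣ) : diagHom (u, u) = scalar (Fin 2) u := by
  ext i j
  fin_cases i <;> fin_cases j <;> simp

lemma diagHom_mul_upperRightHom (u : Rˣ) (x : R) :
    diagHom (u, 1) * upperRightHom x = upperRightHom (u * x) * diagHom (u, 1) := by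
  ext i j
  fin_cases i <;> fin_cases j <;> simp

lemma diagHom_mul_lowerLeftHom (u : Rˣ) (x : R) :
    diagHom (1, u) * lowerLeftHom x = lowerLeftHom (u * x) * diagHom (1, u) := by
  ext i j
  fin_cases i <;> fin_cases j <;> simp

lemma swap_mul_diagHom (a d : Rˣ) :
    swap R 0 1 * diagHom (a, d) = diagHom (d, a) * swap R 0 1 := by
  ext i j
  fin_cases i <;> fin_cases j <;> simp [mul_apply, Matrix.swap]

end CommRing

variable {K : Type*} [Field K]

lemma exists_eq_lowerLeftHom_mul_diagHom_mul_upperRightHom {g : GL (Fin 2) K} (hg : g 0 0 ≠ 0) :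
    ∃ (x : K) (u : Kˣ × Kˣ) (y : K), g = lowerLeftHom x * diagHom u * upperRightHom y := by
  have hdet : g 0 0 * (g 1 1 - g 1 0 * g 0 1 / g 0 0) ≠ 0 := by
    convert g.det_ne_zero using 1
    rw [det_fin_two]
    field_simp
  refine ⟨g 1 0 / g 0 0, (Units.mk0 _ hg, Units.mk0 _ (right_ne_zero_of_mul hdet)),
    g 0 1 / g 0 0, ?_⟩
  ext i j
  fin_cases i <;> fin_cases j <;> simp [mul_apply, Fin.sum_univ_two] <;> field_simp
  ring

lemma exists_eq_upperRightHom_mul_lowerLeftHom_mul_diagHom_mul_upperRightHom (g : GL (Fin 2) K) :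
    ∃ (w x : K) (u : Kˣ × Kˣ) (y : K),
      g = upperRightHom w * lowerLeftHom x * diagHom u * upperRightHom y := by
  by_cases hg : g 0 0 = 0
  · have h : (upperRightHom 1 * g : GL (Fin 2) K) 0 0 ≠ 0 := by
      have hg₁ : g 1 0 ≠ 0 := fun h => g.det_ne_zero (by simp [det_fin_two, hg, h])
      simpa [mul_apply, Fin.sum_univ_two, hg] using hg₁
    obtain ⟨x, u, y, hxuy⟩ := exists_eq_lowerLeftHom_mul_diagHom_mul_upperRightHom h
    refine ⟨-1, x, u, y, ?_⟩
    rw [mul_assoc, mul_assoc, ← mul_assoc (lowerLeftHom x), ← hxuy, ← mul_assoc,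
      ← AddChar.map_add_eq_mul, neg_add_cancel, AddChar.map_zero_eq_one, one_mul]
  · obtain ⟨x, u, y, hxuy⟩ := exists_eq_lowerLeftHom_mul_diagHom_mul_upperRightHom hg
    exact ⟨0, x, u, y, by rw [AddChar.map_zero_eq_one, one_mul, hxuy]⟩

theorem _root_.MonoidHom.eq_one_of_map_scalar_eq_one [NeZero (2 : K)] {A : Type*} [CommGroup A]
    (hA : Odd (Nat.card A)) {f : GL (Fin 2) K →* A} (hf : ∀ u, f (scalar (Fin 2) u) = 1) :
    f = 1 := by
  let two : Kˣ := Units.mk0 2 two_ne_zero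
  have h_two_mul (x : K) : (two : K) * x = x + x := two_mul x
  have hE (x : K) : f (upperRightHom x) = 1 := by
    refine f.map_eq_one_of_semiconjBy_sq (x := diagHom (two, 1)) ?_
    rw [SemiconjBy, diagHom_mul_upperRightHom, h_two_mul, AddChar.map_add_eq_mul, sq]
  have hF (x : K) : f (lowerLeftHom x) = 1 := by
    refine f.map_eq_one_of_semiconjBy_sq (x := diagHom (1, two)) ?_
    rw [SemiconjBy, diagHom_mul_lowerLeftHom, h_two_mul, AddChar.map_add_eq_mul, sq]
  have hD₁ (u : Kˣ) : f (diagHom (u, 1)) = 1 := by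
    refine eq_one_of_sq_eq_one_of_odd_card hA ?_
    calc f (diagHom (u, 1)) ^ 2 = f (diagHom (u, 1)) * f (diagHom (1, u)) := by
          rw [sq, f.map_eq_of_semiconjBy (swap_mul_diagHom u 1)]
      _ = 1 := by rw [← map_mul, ← map_mul, Prod.mk_mul_mk, mul_one, one_mul, diagHom_self, hf]
  have hD (u : Kˣ × Kˣ) : f (diagHom u) = 1 := by
    have : u = (u.1 * u.2⁻¹, 1) * (u.2, u.2) := by ext <;> simp
    rw [this, map_mul, map_mul, hD₁, diagHom_self, hf, one_mul]
  ext g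
  obtain ⟨w, x, u, y, rfl⟩ := exists_eq_upperRightHom_mul_lowerLeftHom_mul_diagHom_mul_upperRightHom g
  simp only [map_mul, hE, hF, hD, one_mul, MonoidHom.one_apply]

end Matrix.GeneralLinearGroup

theorem stmt15_general (q : ℕ) [Fact (Nat.Prime q)] (hq : Odd q)
    (A : Type*) [CommGroup A] (hA : Odd (Nat.card A))
    (π : (ZMod q)ˣ →* A)
    (B : Subgroup (Matrix.GeneralLinearGroup (Fin 2) (ZMod q)))
    [B.FiniteIndex]
    (α : B →* A)
    (hα : ∀ (g : B) (a d : (ZMod q)ˣ),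
      ((g : Matrix.GeneralLinearGroup (Fin 2) (ZMod q)) :
        Matrix (Fin 2) (Fin 2) (ZMod q)) 0 0 = a →
      ((g : Matrix.GeneralLinearGroup (Fin 2) (ZMod q)) :
        Matrix (Fin 2) (Fin 2) (ZMod q)) 1 1 = d →
      α g = π (a * d⁻¹)) :
    α.transfer = 1 := by
  have : NeZero (2 : ZMod q) := ⟨Ring.two_ne_zero <| by
    rw [ZMod.ringChar_zmod_n]
    rintro rfl
    exact absurd hq (by decide)⟩
  refine MonoidHom.eq_one_of_map_scalar_eq_one hA fun u => ?_
  have hu : Matrix.GeneralLinearGroup.scalar (Fin 2) u ∈ Subgroup.center _ :=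
    Subgroup.mem_center_iff.mpr fun g => (Matrix.GeneralLinearGroup.scalar_commute u g).symm
  rw [α.transfer_eq_of_mem_center hu, hα _ (u ^ B.index) (u ^ B.index), mul_inv_cancel, map_one]
    <;> simp [← map_pow]

/-- Let `q` be an odd prime, `G = GL₂(ℤ/q)`, `B` the Borel of upper-triangular
matrices, `A` an abelian group of odd order which is a quotient of `(ℤ/q)*`, and
`α : B → A` the homomorphism `diag(a,d) ↦ a/d`.  Then the transfer of `α` from `B`
to `G` is the trivial homomorphism. -/
theorem stmt15 (q : ℕ) [Fact (Nat.Prime q)] (hq : Odd q)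
    (A : Type*) [CommGroup A] [Finite A] (hA : Odd (Nat.card A))
    (π : (ZMod q)ˣ →* A) (hπ : Function.Surjective π)
    (B : Subgroup (Matrix.GeneralLinearGroup (Fin 2) (ZMod q)))
    (hB : ∀ g : Matrix.GeneralLinearGroup (Fin 2) (ZMod q),
      g ∈ B ↔ (g : Matrix (Fin 2) (Fin 2) (ZMod q)) 1 0 = 0)
    [B.FiniteIndex]
    (α : B →* A)
    (hα : ∀ (g : B) (a d : (ZMod q)ˣ),
      ((g : Matrix.GeneralLinearGroup (Fin 2) (ZMod q)) :
        Matrix (Fin 2) (Fin 2) (ZMod q)) 0 0 = a →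
      ((g : Matrix.GeneralLinearGroup (Fin 2) (ZMod q)) :
        Matrix (Fin 2) (Fin 2) (ZMod q)) 1 1 = d →
      α g = π (a * d⁻¹)) :
    α.transfer = 1 :=
  stmt15_general q hq A hA π B α hα
end

section
/- Let A be a commutative ring, Δ a finite group acting on A by ring automorphisms with B = A^Δ, and suppose A/B is Galois with group Δ in the sense that the natural map A ⊗_B A → ∏_{δ∈Δ} A (sending x ⊗ y to (x·δ(y))_δ) is an isomorphism. Let M be an A-module with a semilinear Δ-action (g(am) = g(a)g(m)). If A is faithfully flat over B, then Hⁿ(Δ, M) = 0 for all n ≥ 1. -/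
/-!
The Galois condition gives an element `a₀ ∈ A` of trace `∑ δ, δ • a₀ = 1`: a preimage of the
unit vector at `1` under `A ⊗_B A ≅ ∏_Δ A` writes `1 = ∑ xᵢ tr(yᵢ)`, so the trace ideal of `B`
generates the unit ideal of `A`, and by faithful flatness it is already the unit ideal of `B`.

With such an `a₀` and semilinearity, `M` is a retract of the coinduced module `Map(Δ, M)`:
`m ↦ (x ↦ x • m)` is split by `f ↦ ∑ x, x • (a₀ • f x⁻¹)`. By Shapiro's lemma the coinduced
module has the cohomology of the trivial group, which vanishes in positive degrees.
-/

open scoped TensorProduct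

/-- The subring of `Δ`-fixed points of a ring with a `Δ`-action. -/
def fixedSubring (Δ A : Type) [Group Δ] [CommRing A] [MulSemiringAction Δ A] : Subring A where
  carrier := {a | ∀ g : Δ, g • a = a}
  zero_mem' := fun g => smul_zero g
  one_mem' := fun g => smul_one g
  add_mem' := fun {a b} ha hb g => by rw [smul_add, ha g, hb g]
  mul_mem' := fun {a b} ha hb g => by rw [smul_mul', ha g, hb g]
  neg_mem' := fun {a} ha g => by rw [smul_neg, ha g]

namespace fixedSubring

variable {Δ A : Type} [Group Δ] [Fintype Δ] [CommRing A] [MulSemiringAction Δ A]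

theorem sum_smul_mem (a : A) : ∑ δ : Δ, δ • a ∈ fixedSubring Δ A := fun g => by
  rw [Finset.smul_sum]
  exact Fintype.sum_equiv (Equiv.mulLeft g) _ _ fun δ => (mul_smul g δ a).symm

variable (Δ A) in
def trace : A →ₗ[fixedSubring Δ A] fixedSubring Δ A where
  toFun a := ⟨∑ δ : Δ, δ • a, sum_smul_mem a⟩
  map_add' a a' := Subtype.ext <| by simp [Finset.sum_add_distrib]
  map_smul' b a := Subtype.ext <| by
    change ∑ δ : Δ, δ • ((b : A) * a) = b * ∑ δ : Δ, δ • a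
    rw [Finset.mul_sum]
    exact Finset.sum_congr rfl fun δ _ => by rw [smul_mul', b.2 δ]

theorem exists_sum_smul_eq_one [Module.FaithfullyFlat (fixedSubring Δ A) A]
    (Γ : A ⊗[fixedSubring Δ A] A →ₗ[fixedSubring Δ A] (Δ → A))
    (hΓ : ∀ x y : A, Γ (x ⊗ₜ y) = fun δ => x * δ • y) (hsurj : Function.Surjective Γ) :
    ∃ a₀ : A, ∑ δ : Δ, δ • a₀ = 1 := by
  classical
  set I : Ideal (fixedSubring Δ A) := LinearMap.range (trace Δ A)
  have hmem (z : A ⊗[fixedSubring Δ A] A) : ∑ δ, Γ z δ ∈ I.map (algebraMap _ A) := by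
    induction z using TensorProduct.induction_on with
    | zero => simp
    | tmul x y =>
      simp only [hΓ, ← Finset.mul_sum]
      exact Ideal.mul_mem_left _ x (Ideal.mem_map_of_mem _ (LinearMap.mem_range_self _ y))
    | add z z' hz hz' => simpa [Finset.sum_add_distrib] using add_mem hz hz'
  obtain ⟨w, hw⟩ := hsurj (Pi.single 1 1)
  have hone : (1 : fixedSubring Δ A) ∈ I := by
    rw [← Ideal.comap_map_eq_self_of_faithfullyFlat (B := A) I, Ideal.mem_comap, map_one]
    simpa [hw] using hmem w
  obtain ⟨a₀, ha₀⟩ := hone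
  exact ⟨a₀, congrArg Subtype.val ha₀⟩

end fixedSubring

open CategoryTheory

namespace Rep

variable (G M : Type) [Group G] [AddCommGroup M] [DistribMulAction G M]

noncomputable abbrev coindBot : Rep ℤ G :=
  Rep.coind (⊥ : Subgroup G).subtype (Rep.trivial ℤ (⊥ : Subgroup G) M)

noncomputable def toCoindBot : Rep.of (Representation.ofDistribMulAction ℤ G M) ⟶ coindBot G M :=
  Rep.ofHom
    { toFun := fun m => ⟨fun x => x • m, fun s x => by
        obtain rfl : s = 1 := Subsingleton.elim _ _
        simp⟩
      map_add' := fun m m' => by ext; simp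
      map_smul' := fun c m => by ext x; exact smul_comm x c m
      isIntertwining' := fun g => by ext m x; exact (mul_smul _ _ _).symm }

variable {G M} [Fintype G] {A : Type} [Semiring A] [MulSemiringAction G A] [Module A M]

noncomputable def ofCoindBot (a₀ : A) :
    coindBot G M ⟶ Rep.of (Representation.ofDistribMulAction ℤ G M) :=
  Rep.ofHom
    { toFun := fun f => ∑ x : G, x • (a₀ • f.1 x⁻¹)
      map_add' := fun f f' => by simp [smul_add, Finset.sum_add_distrib]
      map_smul' := fun c f => by simp [Finset.smul_sum, smul_comm _ c]
      isIntertwining' := fun g => by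
        ext f
        change ∑ x : G, x • (a₀ • f.1 (x⁻¹ * g)) = g • ∑ x : G, x • (a₀ • f.1 x⁻¹)
        rw [Finset.smul_sum]
        refine (Fintype.sum_equiv (Equiv.mulLeft g) _ _ fun y => ?_).symm
        simp [mul_smul] }

noncomputable def retractCoindBot
    (hsemi : ∀ (g : G) (a : A) (m : M), g • (a • m) = (g • a) • (g • m))
    {a₀ : A} (ha₀ : ∑ g : G, g • a₀ = 1) :
    Retract (Rep.of (Representation.ofDistribMulAction ℤ G M)) (coindBot G M) where
  i := toCoindBot G M
  r := ofCoindBot a₀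
  retract := by
    ext m
    change ∑ x : G, x • (a₀ • x⁻¹ • m) = m
    simp only [hsemi, smul_inv_smul, ← Finset.sum_smul, ha₀, one_smul]

end Rep

theorem groupCohomology.isZero_succ_of_sum_smul_eq_one {G A M : Type} [Group G] [Fintype G]
    [Semiring A] [MulSemiringAction G A] [AddCommGroup M] [Module A M] [DistribMulAction G M]
    (hsemi : ∀ (g : G) (a : A) (m : M), g • (a • m) = (g • a) • (g • m))
    {a₀ : A} (ha₀ : ∑ g : G, g • a₀ = 1) (n : ℕ) :
    Limits.IsZero (groupCohomology (Rep.of (Representation.ofDistribMulAction ℤ G M)) (n + 1)) :=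
  let F := groupCohomology.functor ℤ G (n + 1)
  Limits.IsZero.of_mono (X := F.obj _) ((Rep.retractCoindBot hsemi ha₀).map F).i <|
    (isZero_groupCohomology_succ_of_subsingleton _ n).of_iso (coindIso _ _)

/-- Galois descent vanishing: if `Δ` is a finite group acting on a commutative ring `A`
with fixed ring `B = A^Δ`, `A/B` is Galois with group `Δ` (the map
`A ⊗_B A → ∏_{δ∈Δ} A`, `x ⊗ y ↦ (x·δy)_δ`, is bijective), `A` is faithfully flat over
`B`, and `M` is an `A`-module with semilinear `Δ`-action, then `Hⁿ(Δ, M) = 0` for `n ≥ 1`. -/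
theorem stmt18 (Δ A M : Type) [Group Δ] [Finite Δ] [CommRing A] [MulSemiringAction Δ A]
    [AddCommGroup M] [Module A M] [DistribMulAction Δ M]
    (hsemi : ∀ (g : Δ) (a : A) (m : M), g • (a • m) = (g • a) • (g • m))
    (galois :
      letI : Algebra (fixedSubring Δ A) A := (fixedSubring Δ A).subtype.toAlgebra
      ∃ Γ : A ⊗[fixedSubring Δ A] A →ₗ[fixedSubring Δ A] (Δ → A),
        (∀ x y : A, Γ (x ⊗ₜ y) = fun δ => x * δ • y) ∧ Function.Bijective Γ)
    (hflat :
      letI : Algebra (fixedSubring Δ A) A := (fixedSubring Δ A).subtype.toAlgebra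
      Module.FaithfullyFlat (fixedSubring Δ A) A)
    (n : ℕ) (hn : 1 ≤ n) :
    Subsingleton (groupCohomology (Rep.of (Representation.ofDistribMulAction ℤ Δ M)) n) := by
  have := Fintype.ofFinite Δ
  have : Module.FaithfullyFlat (fixedSubring Δ A) A := hflat
  obtain ⟨Γ, hΓ, hΓbij⟩ := galois
  obtain ⟨a₀, ha₀⟩ := fixedSubring.exists_sum_smul_eq_one Γ hΓ hΓbij.surjective
  obtain ⟨m, rfl⟩ := Nat.exists_eq_add_of_le' hn
  exact ModuleCat.isZero_iff_subsingleton.mp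
    (groupCohomology.isZero_succ_of_sum_smul_eq_one hsemi ha₀ m)
end
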